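/- arXiv:1611.02003 — 2 statements merged into one kernel-verified Lean document; each statement's English description precedes it below -/
import Mathlib

section
/- Let N be an odd positive integer, σ a permutation of {1,…,N}, and define Morse numbers i : {1,…,N} → ℤ by i(1) = 0 and i(m+1) = i(m) + (-1)^{m+1} · sign(σ⁻¹(m+1) − σ⁻¹(m)). Then the number of m with i(m) even exceeds the number of m with i(m) odd by exactly 1; equivalently, Σ_{m=1}^{N} (-1)^{i(m)} = 1. -/
/-- The Morse-number recursion (1.22a): with 0-based indices `m` (corresponding to
1-based index `m+1`), `i(m+1) = i(m) + (-1)^m · sign(σ⁻¹(m+1) − σ⁻¹(m))`. -/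
def MorseRec (N : ℕ) (σ : Equiv.Perm (Fin N)) (i : Fin N → ℤ) : Prop :=
  ∀ (m : ℕ) (hm : m + 1 < N),
    i ⟨m + 1, hm⟩ = i ⟨m, Nat.lt_of_succ_lt hm⟩ +
      (-1 : ℤ) ^ m *
        Int.sign (((σ.symm ⟨m + 1, hm⟩).val : ℤ) -
          ((σ.symm ⟨m, Nat.lt_of_succ_lt hm⟩).val : ℤ))

lemma neg_pow_natAbs_add (a e : ℤ) (he : e = 1 ∨ e = -1) :
    (-1:ℤ)^(a+e).natAbs = -(-1:ℤ)^a.natAbs := by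
  rcases Int.even_or_odd a with h | h
  · have h1 : Odd (a + e) := by
      rcases he with rfl | rfl
      · exact h.add_one
      · simpa [sub_eq_add_neg] using h.sub_odd odd_one
    rw [(Int.natAbs_odd.mpr h1).neg_one_pow, (Int.natAbs_even.mpr h).neg_one_pow]
  · have h1 : Even (a + e) := by
      rcases he with rfl | rfl
      · exact h.add_one
      · simpa [sub_eq_add_neg] using h.sub_odd odd_one
    rw [(Int.natAbs_even.mpr h1).neg_one_pow, (Int.natAbs_odd.mpr h).neg_one_pow]
    ring

/-- for odd `N`, the number of even Morse numbers exceeds the number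
of odd ones by exactly one: `Σ_{m=1}^{N} (-1)^{i(m)} = 1`. -/
theorem morse_euler_char (N : ℕ) (hN : 0 < N) (hodd : Odd N)
    (σ : Equiv.Perm (Fin N)) (i : Fin N → ℤ)
    (h0 : i ⟨0, hN⟩ = 0) (hrec : MorseRec N σ i) :
    (∑ m : Fin N, (-1 : ℤ) ^ (i m).natAbs) = 1 := by
  have key : ∀ m (hm : m < N), (-1:ℤ)^(i ⟨m, hm⟩).natAbs = (-1:ℤ)^m := by
    intro m
    induction m with
    | zero => intro hm; simp [h0]
    | succ n ih =>
      intro hm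
      have hn := Nat.lt_of_succ_lt hm
      have hd : (((σ.symm ⟨n + 1, hm⟩).val : ℤ) -
          ((σ.symm ⟨n, hn⟩).val : ℤ)) ≠ 0 := by
        intro h
        have : σ.symm ⟨n + 1, hm⟩ = σ.symm ⟨n, hn⟩ := by
          apply Fin.ext
          exact_mod_cast sub_eq_zero.mp h
        have := σ.symm.injective this
        simp [Fin.ext_iff] at this
      have hs : Int.sign (((σ.symm ⟨n + 1, hm⟩).val : ℤ) -
          ((σ.symm ⟨n, hn⟩).val : ℤ)) = 1 ∨ Int.sign (((σ.symm ⟨n + 1, hm⟩).val : ℤ) -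
          ((σ.symm ⟨n, hn⟩).val : ℤ)) = -1 := by
        rcases hd.lt_or_gt with h | h
        · right; exact Int.sign_eq_neg_one_iff_neg.mpr h
        · left; exact Int.sign_eq_one_iff_pos.mpr h
      have he : (-1:ℤ)^n * Int.sign (((σ.symm ⟨n + 1, hm⟩).val : ℤ) -
          ((σ.symm ⟨n, hn⟩).val : ℤ)) = 1 ∨ (-1:ℤ)^n * Int.sign (((σ.symm ⟨n + 1, hm⟩).val : ℤ) -
          ((σ.symm ⟨n, hn⟩).val : ℤ)) = -1 := by
        rcases hs with h | h <;>
          rcases Nat.even_or_odd n with h2 | h2 <;>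
          simp [h, h2.neg_one_pow]
      rw [hrec n hm, neg_pow_natAbs_add _ _ he, ih hn, pow_succ]
      ring
  have : (∑ m : Fin N, (-1 : ℤ) ^ (i m).natAbs) = ∑ m : Fin N, (-1:ℤ)^(m:ℕ) := by
    apply Finset.sum_congr rfl
    intro m _
    exact key m.val m.isLt
  rw [this, Fin.sum_univ_eq_sum_range (fun m => (-1:ℤ)^m), neg_one_geom_sum,
    if_neg (Nat.not_even_iff_odd.mpr hodd)]
end

section
/- Consider the octahedron graph (the 1-skeleton of the octahedron, i.e. the complete tripartite graph K_{2,2,2} with vertex set {1,…,6} and pairs of non-adjacent vertices {1,4}, {2,5}, {3,6}), embedded on the 2-sphere with its 8 triangular faces. Suppose two distinct vertices N and S and two edge-disjoint N-to-S paths P₁, P₂ in the graph are given such that P₁ ∪ P₂ is a simple closed curve decomposing the remaining faces into two hemispheres W and E, and suppose: (a) for each of the two hemispheres, the face in that hemisphere adjacent to the first edge of one meridian path at N shares at least one meridian edge with the face in the opposite hemisphere adjacent to the last edge of the same meridian path at S; and (b) there is an acyclic edge orientation with unique source N and unique sink S in which every edge interior to W with an endpoint on (P₁ ∪ P₂) \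 {N, S} points toward that endpoint, and every edge interior to E with an endpoint on (P₁ ∪ P₂) \ {N, S} points away from it. Then N and S are adjacent vertices of the octahedron (they are not an antipodal pair). -/
/-- Adjacency in the octahedron graph K_{2,2,2} on vertices {0,…,5}, with
antipodal (non-adjacent) pairs {0,3}, {1,4}, {2,5} (equal residues mod 3). -/
def octAdj (a b : Fin 6) : Prop := a ≠ b ∧ a.val % 3 ≠ b.val % 3

/-- The triangular faces of the octahedron: 3-element cliques. -/
def octFace (F : Finset (Fin 6)) : Prop :=
  F.card = 3 ∧ ∀ a ∈ F, ∀ b ∈ F, a ≠ b → octAdj a b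

/-- The edges of the octahedron, as unordered pairs of adjacent vertices. -/
def octEdge (e : Finset (Fin 6)) : Prop := ∃ a b : Fin 6, octAdj a b ∧ e = {a, b}

/-- `e` is an edge traversed by the vertex list `P`. -/
def pathEdge (P : List (Fin 6)) (e : Finset (Fin 6)) : Prop :=
  ∃ (k : ℕ) (h : k + 1 < P.length),
    e = {P.get ⟨k, Nat.lt_of_succ_lt h⟩, P.get ⟨k + 1, h⟩}

/-- `e` is the first edge of the vertex list `P`. -/
def firstEdge (P : List (Fin 6)) (e : Finset (Fin 6)) : Prop :=
  ∃ h : 1 < P.length, e = {P.get ⟨0, Nat.lt_of_succ_lt h⟩, P.get ⟨1, h⟩}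

/-- `e` is the last edge of the vertex list `P`. -/
def lastEdge (P : List (Fin 6)) (e : Finset (Fin 6)) : Prop := firstEdge P.reverse e

/-- `P` is a simple path in the octahedron graph from `Nv` to `Sv`. -/
def isPath (P : List (Fin 6)) (Nv Sv : Fin 6) : Prop :=
  P.head? = some Nv ∧ P.getLast? = some Sv ∧ List.Chain' octAdj P ∧ P.Nodup

/-!
If the poles were antipodal, every other vertex would be adjacent to both of them, and the two
meridians would run through disjoint parts of the four-vertex equator; so one meridian has at
most two interior vertices. For a meridian `N a S`, pick a common neighbour `x` of `N` and `a`
and let `x'` be its antipode: the faces `Nax` and `Nax'` are separated by the meridian edge `Na`,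
while `Nax'` and `Sax'` share the non-meridian edge `ax'`. For a meridian `N a x S`, the faces
`Nax'`, `Nax`, `Sax`, `Sxa'` (primes denoting antipodes) are separated in turn by the three
meridian edges `Na`, `ax`, `xS`. Either way a face on the first meridian edge and a face on the
last one lie in opposite hemispheres while sharing at most one vertex, against the overlap
condition.
-/

instance (u v : Fin 6) : Decidable (octAdj u v) := inferInstanceAs (Decidable (_ ∧ _))

def antipode (v : Fin 6) : Fin 6 := v + 3

@[simp, grind =] lemma antipode_antipode (v : Fin 6) : antipode (antipode v) = v := by
  revert v; decide

@[grind .] lemma ne_antipode_self (v : Fin 6) : v ≠ antipode v := by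
  revert v; decide

@[grind =] lemma octAdj_iff {u v : Fin 6} : octAdj u v ↔ u ≠ v ∧ u ≠ antipode v := by
  revert u v; decide

@[simp] lemma octAdj_antipode_right {u v : Fin 6} : octAdj u (antipode v) ↔ octAdj u v := by
  revert u v; decide

@[simp] lemma octAdj_antipode_left {u v : Fin 6} : octAdj (antipode u) v ↔ octAdj u v := by
  revert u v; decide

lemma not_octAdj_antipode (v : Fin 6) : ¬ octAdj v (antipode v) := by
  revert v; decide

lemma octAdj.symm {u v : Fin 6} (h : octAdj u v) : octAdj v u := ⟨h.1.symm, h.2.symm⟩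

lemma eq_antipode_of_not_octAdj {u v : Fin 6} (hne : u ≠ v) (h : ¬ octAdj u v) :
    v = antipode u := by
  revert u v; decide

lemma exists_common_octAdj (u v : Fin 6) : ∃ x, octAdj u x ∧ octAdj v x := by
  revert u v; decide

lemma octEdge_of_octAdj {u v : Fin 6} (h : octAdj u v) : octEdge {u, v} := ⟨u, v, h, rfl⟩

lemma octEdge.card_eq_two {e : Finset (Fin 6)} (he : octEdge e) : e.card = 2 := by
  obtain ⟨u, v, huv, rfl⟩ := he
  exact Finset.card_pair huv.1

lemma octFace_of_octAdj {u v w : Fin 6} (huv : octAdj u v) (huw : octAdj u w) (hvw : octAdj v w) :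
    octFace {u, v, w} := by
  refine ⟨Finset.card_eq_three.mpr ⟨u, v, w, huv.1, huw.1, hvw.1, rfl⟩, ?_⟩
  simp only [Finset.mem_insert, Finset.mem_singleton]
  rintro a (rfl | rfl | rfl) b (rfl | rfl | rfl) hab <;>
    first | exact absurd rfl hab | assumption | exact octAdj.symm ‹_›

lemma pathEdge_cons_cons (u v : Fin 6) (l : List (Fin 6)) : pathEdge (u :: v :: l) {u, v} :=
  ⟨0, by simp, rfl⟩

lemma pathEdge.cons {l : List (Fin 6)} {e : Finset (Fin 6)} (h : pathEdge l e) (u : Fin 6) :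
    pathEdge (u :: l) e := by
  obtain ⟨k, hk, rfl⟩ := h
  exact ⟨k + 1, by simpa using hk, rfl⟩

lemma mem_of_pathEdge {P : List (Fin 6)} {e : Finset (Fin 6)} {v : Fin 6}
    (h : pathEdge P e) (hv : v ∈ e) : v ∈ P := by
  obtain ⟨k, hk, rfl⟩ := h
  simp only [Finset.mem_insert, Finset.mem_singleton] at hv
  rcases hv with rfl | rfl <;> exact List.get_mem _ _

lemma firstEdge_cons_cons (u v : Fin 6) (l : List (Fin 6)) : firstEdge (u :: v :: l) {u, v} :=
  ⟨by simp, rfl⟩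

lemma lastEdge_append_pair (l : List (Fin 6)) (u v : Fin 6) : lastEdge (l ++ [u, v]) {u, v} := by
  rw [lastEdge, List.reverse_append]
  exact ⟨by simp, Finset.pair_comm u v⟩

lemma isPath.isChain {P : List (Fin 6)} {N S : Fin 6} (h : isPath P N S) : P.IsChain octAdj :=
  h.2.2.1

lemma isPath.nodup {P : List (Fin 6)} {N S : Fin 6} (h : isPath P N S) : P.Nodup := h.2.2.2

lemma isPath.three_le_length {P : List (Fin 6)} {N S : Fin 6} (h : isPath P N S) (hNS : N ≠ S)
    (hadj : ¬ octAdj N S) : 3 ≤ P.length := by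
  have hP := h.isChain
  obtain ⟨hN, hS, -, -⟩ := h
  rcases P with _ | ⟨u, _ | ⟨v, _ | ⟨w, l⟩⟩⟩ <;> simp_all

lemma isPath.eq_of_length_le_four {P : List (Fin 6)} {N S : Fin 6} (h : isPath P N S)
    (hNS : N ≠ S) (hadj : ¬ octAdj N S) (hl : P.length ≤ 4) :
    (∃ a, P = [N, a, S] ∧ octAdj N a) ∨
      ∃ a x, P = [N, a, x, S] ∧ octAdj N a ∧ octAdj a x ∧ octAdj x S := by
  have := h.three_le_length hNS hadj
  have hP := h.isChain
  obtain ⟨hN, hS, -, -⟩ := h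
  rcases P with _ | ⟨u, _ | ⟨v, _ | ⟨w, _ | ⟨z, _ | ⟨y, l⟩⟩⟩⟩⟩ <;> simp_all
  omega

lemma List.Nodup.length_add_length_le {α : Type*} [Fintype α] [DecidableEq α] {l₁ l₂ : List α}
    (h₁ : l₁.Nodup) (h₂ : l₂.Nodup) {s : Finset α} (hs : ∀ v ∈ l₁, v ∈ l₂ → v ∈ s) :
    l₁.length + l₂.length ≤ Fintype.card α + s.card := by
  rw [← List.toFinset_card_of_nodup h₁, ← List.toFinset_card_of_nodup h₂,
    ← Finset.card_union_add_card_inter]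
  gcongr
  · exact Finset.card_le_univ _
  · intro v
    simpa using hs v

def IsHemisphereColoring (mer : Finset (Fin 6) → Prop) (H : Finset (Fin 6) → Bool) : Prop :=
  ∀ e F G, octEdge e → octFace F → octFace G → e ⊆ F → e ⊆ G → F ≠ G → (mer e ↔ H F ≠ H G)

def MeridianOverlap (mer : Finset (Fin 6) → Prop) (H : Finset (Fin 6) → Bool)
    (P : List (Fin 6)) : Prop :=
  ∀ F G, octFace F → octFace G →
    (∃ e, octEdge e ∧ firstEdge P e ∧ e ⊆ F) → (∃ e, octEdge e ∧ lastEdge P e ∧ e ⊆ G) →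
    H F ≠ H G → ∃ e, octEdge e ∧ mer e ∧ e ⊆ F ∧ e ⊆ G

lemma Bool.ne_of_ne_of_ne_of_ne {a b c d : Bool} (h₁ : a ≠ b) (h₂ : b ≠ c) (h₃ : c ≠ d) :
    a ≠ d := by
  decide +revert

section Hemispheres

variable {mer : Finset (Fin 6) → Prop} {H : Finset (Fin 6) → Bool}

lemma MeridianOverlap.one_lt_card_inter {P : List (Fin 6)} (h : MeridianOverlap mer H P)
    {F G : Finset (Fin 6)} (hF : octFace F) (hG : octFace G)
    (hfirst : ∃ e, octEdge e ∧ firstEdge P e ∧ e ⊆ F)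
    (hlast : ∃ e, octEdge e ∧ lastEdge P e ∧ e ⊆ G)
    (hH : H F ≠ H G) : 1 < (F ∩ G).card := by
  obtain ⟨e, he, -, heF, heG⟩ := h F G hF hG hfirst hlast hH
  calc 1 < e.card := by rw [he.card_eq_two]; norm_num
    _ ≤ (F ∩ G).card := Finset.card_le_card (Finset.subset_inter heF heG)

lemma false_of_meridian_length_three {N a : Fin 6} (hNa : octAdj N a)
    (hsep : IsHemisphereColoring mer H) (hov : MeridianOverlap mer H [N, a, antipode N])
    (hmer : mer {N, a}) (hequator : ∀ y, octAdj N y → octAdj a y → ¬ mer {a, y}) : False := by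
  obtain ⟨x, hNx, hax⟩ := exists_common_octAdj N a
  have hF : octFace {N, a, x} := octFace_of_octAdj hNa hNx hax
  have hF' : octFace {N, a, antipode x} := octFace_of_octAdj hNa (by simpa) (by simpa)
  have hG : octFace {antipode N, a, antipode x} :=
    octFace_of_octAdj (by simpa) (by simpa) (by simpa)
  have hFF' : H {N, a, x} ≠ H {N, a, antipode x} := by
    refine (hsep _ _ _ (octEdge_of_octAdj hNa) hF hF' (by simp) (by simp) ?_).mp hmer
    exact ne_of_mem_of_not_mem' (a := x) (by simp) (by grind)
  have hF'G : H {N, a, antipode x} = H {antipode N, a, antipode x} := by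
    by_contra hne
    refine hequator (antipode x) (by simpa) (by simpa) ?_
    refine (hsep _ _ _ (octEdge_of_octAdj (by simpa)) hF' hG (by simp) (by simp) ?_).mpr hne
    exact ne_of_mem_of_not_mem' (a := N) (by simp) (by grind)
  have hinter := hov.one_lt_card_inter hF hG
    ⟨_, octEdge_of_octAdj hNa, firstEdge_cons_cons _ _ _, by simp⟩
    ⟨_, octEdge_of_octAdj (by simpa using hNa.symm), lastEdge_append_pair [N] a (antipode N),
      by simp [Finset.insert_subset_iff]⟩ (hF'G ▸ hFF')
  have hsub : {N, a, x} ∩ {antipode N, a, antipode x} ⊆ ({a} : Finset (Fin 6)) := by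
    intro y
    grind
  have := (Finset.card_le_card hsub).trans_eq (Finset.card_singleton a)
  omega

lemma false_of_meridian_length_four {N a x : Fin 6} (hNa : octAdj N a) (hax : octAdj a x)
    (hNx : octAdj N x) (hsep : IsHemisphereColoring mer H)
    (hov : MeridianOverlap mer H [N, a, x, antipode N])
    (hNa_mer : mer {N, a}) (hax_mer : mer {a, x}) (hxS_mer : mer {x, antipode N}) : False := by
  have hF : octFace {N, a, antipode x} := octFace_of_octAdj hNa (by simpa) (by simpa)
  have hF₁ : octFace {N, a, x} := octFace_of_octAdj hNa hNx hax
  have hF₂ : octFace {antipode N, a, x} := octFace_of_octAdj (by simpa) (by simpa) hax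
  have hG : octFace {antipode N, x, antipode a} :=
    octFace_of_octAdj (by simpa) (by simpa) (by simpa using hax.symm)
  have h₁ : H {N, a, antipode x} ≠ H {N, a, x} := by
    refine (hsep _ _ _ (octEdge_of_octAdj hNa) hF hF₁ (by simp) (by simp) ?_).mp hNa_mer
    exact ne_of_mem_of_not_mem' (a := antipode x) (by simp) (by grind)
  have h₂ : H {N, a, x} ≠ H {antipode N, a, x} := by
    refine (hsep _ _ _ (octEdge_of_octAdj hax) hF₁ hF₂ (by simp) (by simp) ?_).mp hax_mer
    exact ne_of_mem_of_not_mem' (a := N) (by simp) (by grind)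
  have h₃ : H {antipode N, a, x} ≠ H {antipode N, x, antipode a} := by
    refine (hsep _ _ _ (octEdge_of_octAdj (by simpa using hNx.symm)) hF₂ hG
      (by simp [Finset.insert_subset_iff]) (by simp [Finset.insert_subset_iff]) ?_).mp hxS_mer
    exact ne_of_mem_of_not_mem' (a := a) (by simp) (by grind)
  have hinter := hov.one_lt_card_inter hF hG
    ⟨_, octEdge_of_octAdj hNa, firstEdge_cons_cons _ _ _, by simp⟩
    ⟨_, octEdge_of_octAdj (by simpa using hNx.symm), lastEdge_append_pair [N, a] x (antipode N),
      by simp [Finset.insert_subset_iff]⟩ (Bool.ne_of_ne_of_ne_of_ne h₁ h₂ h₃)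
  have hdisj : {N, a, antipode x} ∩ {antipode N, x, antipode a} = (∅ : Finset (Fin 6)) := by
    ext y
    grind
  simp [hdisj] at hinter

lemma false_of_meridian_length_le_four {P Q : List (Fin 6)} {N : Fin 6}
    (hP : isPath P N (antipode N)) (hlen : P.length ≤ 4)
    (hPQ : ∀ v ∈ P, v ∈ Q → v = N ∨ v = antipode N)
    (hsep : IsHemisphereColoring mer H) (hov : MeridianOverlap mer H P)
    (hmer : ∀ e, mer e ↔ pathEdge P e ∨ pathEdge Q e) : False := by
  rcases hP.eq_of_length_le_four (ne_antipode_self N) (not_octAdj_antipode N) hlen with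
    ⟨a, rfl, hNa⟩ | ⟨a, x, rfl, hNa, hax, hxS⟩
  · refine false_of_meridian_length_three hNa hsep hov
      ((hmer _).mpr (.inl (pathEdge_cons_cons _ _ _))) fun y hNy hay hay_mer => ?_
    rcases (hmer _).mp hay_mer with hP | hQ
    · have hy := mem_of_pathEdge hP (v := y) (by simp)
      grind
    · have ha := hPQ a (by simp) (mem_of_pathEdge hQ (by simp))
      grind
  · exact false_of_meridian_length_four hNa hax (by simpa using hxS.symm) hsep hov
      ((hmer _).mpr (.inl (pathEdge_cons_cons _ _ _)))
      ((hmer _).mpr (.inl ((pathEdge_cons_cons _ _ _).cons _)))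
      ((hmer _).mpr (.inl (((pathEdge_cons_cons _ _ _).cons _).cons _)))

end Hemispheres

theorem octahedron_poles_adjacent_general
    (Nv Sv : Fin 6) (hNS : Nv ≠ Sv)
    (P₁ P₂ : List (Fin 6))
    (hP₁ : isPath P₁ Nv Sv) (hP₂ : isPath P₂ Nv Sv)
    (hvert : ∀ v : Fin 6, v ∈ P₁ → v ∈ P₂ → v = Nv ∨ v = Sv)
    (H : Finset (Fin 6) → Bool)
    (hHsep : ∀ e F G, octEdge e → octFace F → octFace G → e ⊆ F → e ⊆ G → F ≠ G →
      ((pathEdge P₁ e ∨ pathEdge P₂ e) ↔ H F ≠ H G))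
    (hoverlap : ∀ P, (P = P₁ ∨ P = P₂) → ∀ F G, octFace F → octFace G →
      (∃ e, octEdge e ∧ firstEdge P e ∧ e ⊆ F) →
      (∃ e, octEdge e ∧ lastEdge P e ∧ e ⊆ G) →
      H F ≠ H G →
      ∃ e, octEdge e ∧ (pathEdge P₁ e ∨ pathEdge P₂ e) ∧ e ⊆ F ∧ e ⊆ G) :
    octAdj Nv Sv := by
  by_contra hadj
  obtain rfl := eq_antipode_of_not_octAdj hNS hadj
  have hlen := hP₁.nodup.length_add_length_le hP₂.nodup (s := {Nv, antipode Nv})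
    fun v h₁ h₂ => by simpa using hvert v h₁ h₂
  have hcard : ({Nv, antipode Nv} : Finset (Fin 6)).card ≤ 2 := Finset.card_le_two
  have h₂ := hP₂.three_le_length hNS hadj
  rw [Fintype.card_fin] at hlen
  rcases le_or_gt P₁.length 4 with h₁ | h₁
  · exact false_of_meridian_length_le_four hP₁ h₁ hvert hHsep (hoverlap P₁ (.inl rfl))
      fun _ => Iff.rfl
  · exact false_of_meridian_length_le_four hP₂ (by omega) (fun v h₂ h₁ => hvert v h₁ h₂) hHsep
      (hoverlap P₂ (.inr rfl)) fun _ => or_comm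

/-- Proposition 6.1. Suppose the octahedron carries the structure of
a 3-cell template: poles `Nv ≠ Sv`; two edge-disjoint meridian paths `P₁, P₂` from
`Nv` to `Sv` meeting only at the poles; a hemisphere 2-coloring `H` of the 8 faces
such that two distinct faces sharing an edge get different colors exactly when the
shared edge is a meridian edge, with both hemispheres nonempty; the meridian face
overlap condition (iv); and a bipolar acyclic edge orientation `o` with unique
source `Nv`, unique sink `Sv`, such that edges interior to the Western hemisphere
(`H = true`) point toward their meridian endpoints (≠ poles) and edges interior to
the Eastern hemisphere (`H = false`) point away from them. Then the poles are
edge-adjacent vertices of the octahedron (not an antipodal pair). -/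
theorem octahedron_poles_adjacent
    (Nv Sv : Fin 6) (hNS : Nv ≠ Sv)
    (P₁ P₂ : List (Fin 6))
    (hP₁ : isPath P₁ Nv Sv) (hP₂ : isPath P₂ Nv Sv)
    (hdisj : ∀ e, ¬ (pathEdge P₁ e ∧ pathEdge P₂ e))
    (hvert : ∀ v : Fin 6, v ∈ P₁ → v ∈ P₂ → v = Nv ∨ v = Sv)
    (H : Finset (Fin 6) → Bool)
    (hHsep : ∀ e F G, octEdge e → octFace F → octFace G → e ⊆ F → e ⊆ G → F ≠ G →
      ((pathEdge P₁ e ∨ pathEdge P₂ e) ↔ H F ≠ H G))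
    (hW : ∃ F, octFace F ∧ H F = true) (hE : ∃ F, octFace F ∧ H F = false)
    (hoverlap : ∀ P, (P = P₁ ∨ P = P₂) → ∀ F G, octFace F → octFace G →
      (∃ e, octEdge e ∧ firstEdge P e ∧ e ⊆ F) →
      (∃ e, octEdge e ∧ lastEdge P e ∧ e ⊆ G) →
      H F ≠ H G →
      ∃ e, octEdge e ∧ (pathEdge P₁ e ∨ pathEdge P₂ e) ∧ e ⊆ F ∧ e ⊆ G)
    (o : Fin 6 → Fin 6 → Prop)
    (ho : ∀ a b, o a b → octAdj a b)
    (htot : ∀ a b, octAdj a b → (o a b ↔ ¬ o b a))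
    (hacyc : ∀ v, ¬ Relation.TransGen o v v)
    (hsource : ∀ v, (∀ u, ¬ o u v) ↔ v = Nv)
    (hsink : ∀ v, (∀ u, ¬ o v u) ↔ v = Sv)
    (hWor : ∀ a b : Fin 6, octAdj a b →
      ¬ (pathEdge P₁ ({a, b} : Finset (Fin 6)) ∨ pathEdge P₂ {a, b}) →
      (∀ F, octFace F → ({a, b} : Finset (Fin 6)) ⊆ F → H F = true) →
      (b ∈ P₁ ∨ b ∈ P₂) → b ≠ Nv → b ≠ Sv → o a b)
    (hEor : ∀ a b : Fin 6, octAdj a b →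
      ¬ (pathEdge P₁ ({a, b} : Finset (Fin 6)) ∨ pathEdge P₂ {a, b}) →
      (∀ F, octFace F → ({a, b} : Finset (Fin 6)) ⊆ F → H F = false) →
      (b ∈ P₁ ∨ b ∈ P₂) → b ≠ Nv → b ≠ Sv → o b a) :
    octAdj Nv Sv :=
  octahedron_poles_adjacent_general Nv Sv hNS P₁ P₂ hP₁ hP₂ hvert H hHsep hoverlap
end
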